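/- arXiv:0907.4605 — 4 statements merged into one kernel-verified Lean document; each statement's English description precedes it below -/
import Mathlib

section
/- Let G be a finite group and V a faithful finite-dimensional complex representation of G. Then there exists a G-equivariant injective linear map from the group algebra ℂ[G] (with the left regular representation) into the algebra of complex-valued polynomial functions on V (with the action (g·P)(v) = P(g⁻¹·v)). -/
/-- The action of `g : G` on polynomial functions on `V = ℂⁿ`, given by
`(g · P)(v) = P(g⁻¹ · v)`, as an algebra endomorphism of the polynomial ring. -/
noncomputable def act {G : Type*} [Group G] {n : ℕ} (ρ : Representation ℂ G (Fin n → ℂ)) (g : G) :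
    MvPolynomial (Fin n) ℂ →ₐ[ℂ] MvPolynomial (Fin n) ℂ :=
  MvPolynomial.aeval fun i => ∑ j, ρ g⁻¹ (Pi.single j 1) i • MvPolynomial.X j

open MvPolynomial in
lemma eval_act {G : Type*} [Group G] {n : ℕ} (ρ : Representation ℂ G (Fin n → ℂ)) (g : G)
    (v : Fin n → ℂ) (P : MvPolynomial (Fin n) ℂ) :
    eval v (act ρ g P) = eval (ρ g⁻¹ v) P := by
  rw [act, aeval_def, eval₂_comp_left (eval v)]
  have h1 : (eval v).comp ((algebraMap ℂ (MvPolynomial (Fin n) ℂ)) : ℂ →+* _) =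
      RingHom.id ℂ := by
    ext a; simp [MvPolynomial.algebraMap_eq]
  have h2 : (eval v) ∘ (fun i => ∑ j, ρ g⁻¹ (Pi.single j 1) i • MvPolynomial.X j) =
      ρ g⁻¹ v := by
    funext i
    have := LinearMap.pi_apply_eq_sum_univ (ρ g⁻¹) v
    rw [Function.comp_apply, map_sum, this]
    simp only [Finset.sum_apply, Pi.smul_apply, smul_eq_mul, smul_eval, eval_X]
    refine Finset.sum_congr rfl fun j _ => ?_
    rw [mul_comm, show (Pi.single j 1 : Fin n → ℂ) = fun j' => if j = j' then 1 else 0 from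
      funext fun j' => by simp [Pi.single_apply, eq_comm]]
  rw [h1, h2]
  rfl

lemma act_mul {G : Type*} [Group G] {n : ℕ} (ρ : Representation ℂ G (Fin n → ℂ)) (g h : G)
    (P : MvPolynomial (Fin n) ℂ) :
    act ρ (g * h) P = act ρ g (act ρ h P) := by
  apply MvPolynomial.funext
  intro x
  rw [eval_act, eval_act, eval_act]
  congr 1
  rw [mul_inv_rev, map_mul]
  rfl

/-- For a finite group G with a faithful representation V = ℂⁿ, there is a G-equivariant
injective linear map from the group algebra ℂ[G] (left regular representation) into the
algebra of polynomial functions on V. -/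
theorem stmt_0 {G : Type*} [Group G] [Fintype G] (n : ℕ)
    (ρ : Representation ℂ G (Fin n → ℂ)) (hρ : Function.Injective ρ) :
    ∃ f : MonoidAlgebra ℂ G →ₗ[ℂ] MvPolynomial (Fin n) ℂ,
      Function.Injective f ∧
        ∀ (g : G) (x : MonoidAlgebra ℂ G),
          f (MonoidAlgebra.single g 1 * x) = act ρ g (f x) := by
  classical
  -- find a vector with trivial stabilizer
  obtain ⟨v, hv⟩ : ∃ v : Fin n → ℂ, ∀ g : G, g ≠ 1 → ρ g v ≠ v := by
    by_contra hcon
    push_neg at hcon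
    have hcover : ⋃ g : {g : G // g ≠ 1},
        ((LinearMap.ker (ρ (g : G) - 1) : Submodule ℂ (Fin n → ℂ)) : Set (Fin n → ℂ)) =
        Set.univ := by
      ext w
      simp only [Set.mem_iUnion, Set.mem_univ, iff_true, SetLike.mem_coe, LinearMap.mem_ker]
      obtain ⟨g, hg1, hgw⟩ := hcon w
      exact ⟨⟨g, hg1⟩, by simp [LinearMap.sub_apply, hgw]⟩
    obtain ⟨⟨g, hg1⟩, hgtop⟩ := Subspace.exists_eq_top_of_iUnion_eq_univ hcover
    apply hg1
    apply hρ
    have : ρ g - 1 = 0 := LinearMap.ker_eq_top.mp hgtop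
    have : ρ g = 1 := by
      have := sub_eq_zero.mp this
      exact this
    rw [this, map_one]
  set w : G → Fin n → ℂ := fun g => ρ g⁻¹ v with hw
  -- for each g ≠ 1, pick a coordinate separating w g from w 1
  have hsep : ∀ g : G, g ≠ 1 → ∃ i, w g i ≠ w 1 i := by
    intro g hg
    by_contra hcon
    push_neg at hcon
    apply hv g⁻¹ (by simpa using hg)
    have : w g = w 1 := funext hcon
    simp only [hw, inv_one, map_one] at this
    simpa using this
  choose i hi using fun g (hg : g ≠ 1) => hsep g hg
  set P : MvPolynomial (Fin n) ℂ :=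
    ∏ g ∈ Finset.univ.erase (1 : G),
      if hg : g = 1 then 1 else
        MvPolynomial.C (w 1 (i g hg) - w g (i g hg))⁻¹ *
          (MvPolynomial.X (i g hg) - MvPolynomial.C (w g (i g hg))) with hP
  have hP1 : MvPolynomial.eval (w 1) P = 1 := by
    rw [hP, map_prod]
    apply Finset.prod_eq_one
    intro g hg
    rw [Finset.mem_erase] at hg
    rw [dif_neg hg.1]
    simp only [map_mul, map_sub, MvPolynomial.eval_C, MvPolynomial.eval_X]
    exact inv_mul_cancel₀ (sub_ne_zero.mpr (Ne.symm (hi g hg.1)))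
  have hP0 : ∀ g : G, g ≠ 1 → MvPolynomial.eval (w g) P = 0 := by
    intro g hg
    rw [hP, map_prod]
    apply Finset.prod_eq_zero (Finset.mem_erase.mpr ⟨hg, Finset.mem_univ g⟩)
    rw [dif_neg hg]
    simp
  -- key evaluation formula
  have key : ∀ (h k : G), MvPolynomial.eval (w k) (act ρ h P) =
      if k = h⁻¹ then 1 else 0 := by
    intro h k
    rw [eval_act]
    have hwk : ρ h⁻¹ (w k) = w (k * h) := by
      simp only [hw, mul_inv_rev, map_mul]
      rfl
    rw [hwk]
    by_cases hkh : k = h⁻¹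
    · rw [if_pos hkh, hkh, inv_mul_cancel, hP1]
    · rw [if_neg hkh]
      exact hP0 _ (fun hc => hkh (eq_inv_of_mul_eq_one_left hc))
  refine ⟨(Finsupp.linearCombination ℂ (fun g => act ρ g P)).comp
    (MonoidAlgebra.coeffLinearEquiv ℂ).toLinearMap, ?_, ?_⟩
  · -- injectivity
    have heval : ∀ (x : G →₀ ℂ) (k : G),
        MvPolynomial.eval (w k⁻¹) (Finsupp.linearCombination ℂ (fun g => act ρ g P) x) = x k := by
      intro x k
      rw [Finsupp.linearCombination_apply, map_finsuppSum]
      have : ∀ h c, MvPolynomial.eval (w k⁻¹) (c • act ρ h P) = if h = k then c else 0 := by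
        intro h c
        rw [MvPolynomial.smul_eval, key]
        by_cases hhk : h = k
        · rw [if_pos (by rw [hhk]), if_pos hhk, mul_one]
        · rw [if_neg (fun hc => hhk (by rw [inv_inj] at hc; exact hc.symm)), if_neg hhk, mul_zero]
      simp only [Finsupp.sum]
      rw [Finset.sum_congr rfl fun h _ => this h (x h)]
      by_cases hk : k ∈ x.support
      · rw [Finset.sum_ite_eq' x.support k (fun _ => x _)]
        simp [hk]
      · rw [Finset.sum_ite_eq' x.support k (fun _ => x _)]
        simp only [hk, if_false]
        exact (Finsupp.notMem_support_iff.mp hk).symm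
    intro x y hxy
    ext k
    rw [← heval x.coeff k, ← heval y.coeff k]
    exact congrArg _ hxy
  · -- equivariance
    intro g x
    induction x using MonoidAlgebra.induction_linear with
    | zero => simp
    | add a b ha hb => simp only [mul_add, map_add, ha, hb]
    | single h c =>
      have h1 : MonoidAlgebra.single g (1 : ℂ) * MonoidAlgebra.single h c =
          MonoidAlgebra.single (g * h) c := by
        rw [MonoidAlgebra.single_mul_single, one_mul]
      rw [h1]
      show (Finsupp.linearCombination ℂ fun g => act ρ g P) (Finsupp.single (g * h) c) =
        act ρ g ((Finsupp.linearCombination ℂ fun g => act ρ g P) (Finsupp.single h c))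
      rw [Finsupp.linearCombination_single, Finsupp.linearCombination_single, act_mul, map_smul]
end

section
/- Let V be the common kernel in ℂ[z, z̄] of the operators ∂∂̄ and z^{n−m}∂̄^m + z̄^{n−m}∂^m, where m = ⌊n/2⌋ + 1. Then V has basis {1, z, …, z^{⌊n/2⌋}, z̄, …, z̄^{⌊n/2⌋}, zⁿ − z̄ⁿ}; in particular dim V = 2⌊n/2⌋ + 2. -/
/-- The differential operator `x^α ∂^β`. -/
noncomputable def Dop {τ : Type*} [Fintype τ] [DecidableEq τ] (α β : τ →₀ ℕ) :
    Module.End ℂ (MvPolynomial τ ℂ) :=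
  (LinearMap.mulLeft ℂ (MvPolynomial.monomial α (1 : ℂ))) *
    (Finset.univ.toList.map fun i => ((MvPolynomial.pderiv (R := ℂ) i).toLinearMap) ^ β i).prod

/-- The common kernel in `ℂ[z, z̄]` (with `z = X 0`, `z̄ = X 1`) of the operators `∂∂̄` and
`z^{n-m}∂̄^m + z̄^{n-m}∂^m`, where `m = ⌊n/2⌋ + 1`. -/
noncomputable def Kker (n : ℕ) : Submodule ℂ (MvPolynomial (Fin 2) ℂ) :=
  LinearMap.ker (Dop (τ := Fin 2) 0 (Finsupp.single 0 1 + Finsupp.single 1 1)) ⊓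
    LinearMap.ker
      (Dop (τ := Fin 2) (Finsupp.single 0 (n - (n / 2 + 1))) (Finsupp.single 1 (n / 2 + 1)) +
        Dop (τ := Fin 2) (Finsupp.single 1 (n - (n / 2 + 1))) (Finsupp.single 0 (n / 2 + 1)))

open MvPolynomial Finsupp

/-! ### Auxiliary lemmas about partial derivatives and coefficients -/

lemma coeff_pderiv {σ : Type*} [DecidableEq σ] (i : σ) (p : MvPolynomial σ ℂ) (γ : σ →₀ ℕ) :
    coeff γ (pderiv i p) = ((γ i : ℂ) + 1) * coeff (γ + Finsupp.single i 1) p := by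
  induction p using MvPolynomial.induction_on' with
  | monomial s a =>
    rw [pderiv_monomial, coeff_monomial, coeff_monomial]
    split_ifs with h1 h2 h2
    · have hsi : s i = γ i + 1 := by
        have := congrArg (fun f => f i) h2
        simp at this; omega
      rw [hsi]; push_cast; ring
    · have hsi : s i = 0 := by
        by_contra hne
        apply h2
        rw [← h1, tsub_add_cancel_of_le]
        rwa [Finsupp.single_le_iff, Nat.one_le_iff_ne_zero]
      rw [hsi]; simp
    · exfalso; apply h1; rw [h2, add_tsub_cancel_right]
    · ring
  | add p q hp hq => simp only [map_add, coeff_add, hp, hq]; ring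

lemma pderiv_pderiv_comm {σ : Type*} [DecidableEq σ] (i j : σ) (p : MvPolynomial σ ℂ) :
    pderiv i (pderiv j p) = pderiv j (pderiv i p) := by
  apply MvPolynomial.ext
  intro γ
  simp only [_root_.coeff_pderiv]
  rcases eq_or_ne i j with rfl | h
  · ring
  · rw [Finsupp.add_apply, Finsupp.add_apply, Finsupp.single_apply, Finsupp.single_apply,
      if_neg h, if_neg (Ne.symm h),
      add_right_comm γ (Finsupp.single i 1) (Finsupp.single j 1)]
    push_cast; ring

lemma coeff_pderiv_pow {σ : Type*} [DecidableEq σ] (i : σ) (k : ℕ) (p : MvPolynomial σ ℂ)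
    (γ : σ →₀ ℕ) :
    coeff γ (((pderiv (R := ℂ) i).toLinearMap ^ k) p) =
      (∏ j ∈ Finset.range k, ((γ i : ℂ) + j + 1)) * coeff (γ + Finsupp.single i k) p := by
  induction k generalizing p with
  | zero => simp
  | succ k ih =>
    rw [pow_succ, Module.End.mul_apply, ih]
    have hc : ((pderiv (R := ℂ) i).toLinearMap p) = pderiv i p := rfl
    rw [hc, _root_.coeff_pderiv, Finset.prod_range_succ]
    rw [Finsupp.add_apply, Finsupp.single_apply, if_pos rfl, add_assoc, ← Finsupp.single_add]
    push_cast; ring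

/-! ### The exponent pair notation on `Fin 2` -/

/-- `E a b` is the exponent finsupp `(a, b)` on `Fin 2`. -/
noncomputable def E (a b : ℕ) : Fin 2 →₀ ℕ := Finsupp.single 0 a + Finsupp.single 1 b

@[simp] lemma E_apply_zero (a b : ℕ) : E a b 0 = a := by simp [E]
@[simp] lemma E_apply_one (a b : ℕ) : E a b 1 = b := by simp [E]

lemma eq_E_self (δ : Fin 2 →₀ ℕ) : δ = E (δ 0) (δ 1) := by
  ext i; fin_cases i <;> simp [E]

@[simp] lemma single_zero_eq_E (a : ℕ) : (Finsupp.single (0 : Fin 2) a) = E a 0 := by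
  simp [E]

@[simp] lemma single_one_eq_E (b : ℕ) : (Finsupp.single (1 : Fin 2) b) = E 0 b := by
  simp [E]

@[simp] lemma E_add (a b c d : ℕ) : E a b + E c d = E (a + c) (b + d) := by
  ext i; fin_cases i <;> simp

@[simp] lemma E_sub (a b c d : ℕ) : E a b - E c d = E (a - c) (b - d) := by
  ext i; fin_cases i <;> simp [Finsupp.tsub_apply]

@[simp] lemma E_le_E (a b c d : ℕ) : E a b ≤ E c d ↔ a ≤ c ∧ b ≤ d := by
  rw [Finsupp.le_def]
  constructor
  · intro h; exact ⟨by simpa using h 0, by simpa using h 1⟩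
  · rintro ⟨h1, h2⟩ i; fin_cases i <;> simpa

@[simp] lemma E_inj (a b c d : ℕ) : E a b = E c d ↔ a = c ∧ b = d := by
  constructor
  · intro h
    exact ⟨by rw [← E_apply_zero a b, h, E_apply_zero], by rw [← E_apply_one a b, h, E_apply_one]⟩
  · rintro ⟨rfl, rfl⟩; rfl

@[simp] lemma E_zero_zero : E 0 0 = 0 := by simp [E]

lemma zero_eq_E : (0 : Fin 2 →₀ ℕ) = E 0 0 := by simp

/-! ### The differential operators -/

lemma univ_toList_perm : (Finset.univ.toList : List (Fin 2)).Perm [0, 1] := by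
  rw [← Multiset.coe_eq_coe, Finset.coe_toList]
  decide

lemma pderiv_commute : Commute ((pderiv (R := ℂ) (0 : Fin 2)).toLinearMap)
    ((pderiv (R := ℂ) (1 : Fin 2)).toLinearMap) := by
  apply LinearMap.ext
  intro p
  exact pderiv_pderiv_comm 0 1 p

lemma Dop_apply (α β : Fin 2 →₀ ℕ) (p : MvPolynomial (Fin 2) ℂ) :
    Dop α β p = monomial α (1 : ℂ) *
      (((pderiv (R := ℂ) (0 : Fin 2)).toLinearMap ^ β 0)
        (((pderiv (R := ℂ) (1 : Fin 2)).toLinearMap ^ β 1) p)) := by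
  have hperm : ((Finset.univ.toList : List (Fin 2)).map
      fun i => ((pderiv (R := ℂ) i).toLinearMap) ^ β i).Perm
      ([0, 1].map fun i => ((pderiv (R := ℂ) i).toLinearMap) ^ β i) :=
    univ_toList_perm.map _
  have hcomm : (((Finset.univ.toList : List (Fin 2)).map
      fun i => ((pderiv (R := ℂ) i).toLinearMap) ^ β i)).Pairwise Commute := by
    apply List.Pairwise.map
    · intro a b hab
      rcases eq_or_ne a b with rfl | h
      · exact Commute.refl _ |>.pow_pow _ _
      · fin_cases a <;> fin_cases b <;> simp_all
        · exact pderiv_commute.pow_pow _ _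
        · exact pderiv_commute.symm.pow_pow _ _
    · exact List.pairwise_of_forall (fun _ _ => trivial)
  have := hperm.prod_eq' hcomm
  rw [Dop, Module.End.mul_apply, this]
  simp [Module.End.mul_apply]

lemma coeff_Dop (α β : Fin 2 →₀ ℕ) (p : MvPolynomial (Fin 2) ℂ) (γ : Fin 2 →₀ ℕ) :
    coeff γ (Dop α β p) =
      if α ≤ γ then
        (∏ j ∈ Finset.range (β 0), (((γ - α) 0 : ℂ) + j + 1)) *
          ((∏ j ∈ Finset.range (β 1), (((γ - α) 1 : ℂ) + j + 1)) * coeff (γ - α + β) p)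
      else 0 := by
  rw [Dop_apply, coeff_monomial_mul']
  split_ifs with h
  · rw [one_mul, coeff_pderiv_pow, coeff_pderiv_pow]
    have h1 : ((γ - α + Finsupp.single 0 (β 0) : Fin 2 →₀ ℕ)) 1 = ((γ - α : Fin 2 →₀ ℕ)) 1 := by
      rw [Finsupp.add_apply, Finsupp.single_apply]
      simp
    rw [h1]
    have h2 : γ - α + Finsupp.single 0 (β 0) + Finsupp.single 1 (β 1) = γ - α + β := by
      rw [add_assoc]
      congr 1
      ext i; fin_cases i <;> simp
    rw [h2]
  · rfl

lemma beta1_eq : (Finsupp.single (0 : Fin 2) 1 + Finsupp.single (1 : Fin 2) 1) = E 1 1 := rfl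

@[simp] lemma coeff_X0_pow (k : ℕ) (a b : ℕ) :
    coeff (E a b) ((X (0 : Fin 2) : MvPolynomial (Fin 2) ℂ) ^ k) =
      if a = k ∧ b = 0 then 1 else 0 := by
  rw [coeff_X_pow, single_zero_eq_E]
  by_cases h : a = k ∧ b = 0
  · rw [if_pos ((E_inj _ _ _ _).2 ⟨h.1.symm, h.2.symm⟩), if_pos h]
  · rw [if_neg, if_neg h]
    intro hc; rw [E_inj] at hc; exact h ⟨hc.1.symm, hc.2.symm⟩

@[simp] lemma coeff_X1_pow (k : ℕ) (a b : ℕ) :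
    coeff (E a b) ((X (1 : Fin 2) : MvPolynomial (Fin 2) ℂ) ^ k) =
      if a = 0 ∧ b = k then 1 else 0 := by
  rw [coeff_X_pow, single_one_eq_E]
  by_cases h : a = 0 ∧ b = k
  · rw [if_pos ((E_inj _ _ _ _).2 ⟨h.1.symm, h.2.symm⟩), if_pos h]
  · rw [if_neg, if_neg h]
    intro hc; rw [E_inj] at hc; exact h ⟨hc.1.symm, hc.2.symm⟩

lemma prod_factors_ne_zero (a k : ℕ) :
    (∏ j ∈ Finset.range k, ((a : ℂ) + j + 1)) ≠ 0 := by
  apply Finset.prod_ne_zero_iff.2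
  intro j _
  have : ((a : ℂ) + j + 1) = ((a + j + 1 : ℕ) : ℂ) := by push_cast; ring
  rw [this, Ne, Nat.cast_eq_zero]
  omega

lemma zero_le_finsupp (γ : Fin 2 →₀ ℕ) : (0 : Fin 2 →₀ ℕ) ≤ γ := by
  rw [Finsupp.le_def]; intro i; exact Nat.zero_le _

lemma ker1_coeff {P : MvPolynomial (Fin 2) ℂ}
    (h : Dop 0 (Finsupp.single 0 1 + Finsupp.single 1 1) P = 0) (a b : ℕ) :
    coeff (E (a + 1) (b + 1)) P = 0 := by
  have h0 := congrArg (coeff (E a b)) h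
  rw [coeff_Dop, coeff_zero, if_pos (zero_le_finsupp _), beta1_eq] at h0
  simp only [tsub_zero, E_apply_zero, E_apply_one, E_add] at h0
  rcases mul_eq_zero.1 h0 with h1 | h1
  · exact absurd h1 (prod_factors_ne_zero a 1)
  rcases mul_eq_zero.1 h1 with h2 | h2
  · exact absurd h2 (prod_factors_ne_zero b 1)
  · exact h2

lemma ker2_coeff {P : MvPolynomial (Fin 2) ℂ} {mm rr : ℕ}
    (h : (Dop (τ := Fin 2) (Finsupp.single 0 rr) (Finsupp.single 1 mm)
        + Dop (τ := Fin 2) (Finsupp.single 1 rr) (Finsupp.single 0 mm)) P = 0) (e f : ℕ) :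
    (if rr ≤ e then (∏ j ∈ Finset.range mm, ((f : ℂ) + j + 1)) * coeff (E (e - rr) (f + mm)) P
      else 0) +
    (if rr ≤ f then (∏ j ∈ Finset.range mm, ((e : ℂ) + j + 1)) * coeff (E (e + mm) (f - rr)) P
      else 0) = 0 := by
  have h0 := congrArg (coeff (E e f)) h
  rw [LinearMap.add_apply, coeff_add, coeff_Dop, coeff_Dop, coeff_zero] at h0
  simp only [single_zero_eq_E, single_one_eq_E, E_apply_zero, E_apply_one, E_sub, E_le_E,
    Nat.zero_le, and_true, true_and, tsub_zero, E_add, Finset.range_zero, Finset.prod_empty,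
    one_mul, add_zero, zero_add] at h0
  exact h0

lemma Dop1_vanish (p : MvPolynomial (Fin 2) ℂ)
    (hp : ∀ a b : ℕ, coeff (E (a + 1) (b + 1)) p = 0) :
    Dop 0 (Finsupp.single 0 1 + Finsupp.single 1 1) p = 0 := by
  apply MvPolynomial.ext
  intro γ
  rw [eq_E_self γ, coeff_Dop, coeff_zero, if_pos (zero_le_finsupp _), beta1_eq]
  simp only [tsub_zero, E_apply_zero, E_apply_one, E_add]
  rw [hp _ _]
  ring

lemma Dop1_X0 (k : ℕ) : Dop 0 (Finsupp.single 0 1 + Finsupp.single 1 1)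
    ((X (0 : Fin 2) : MvPolynomial (Fin 2) ℂ) ^ k) = 0 := by
  apply Dop1_vanish
  intro a b
  rw [coeff_X0_pow]
  simp

lemma Dop1_X1 (k : ℕ) : Dop 0 (Finsupp.single 0 1 + Finsupp.single 1 1)
    ((X (1 : Fin 2) : MvPolynomial (Fin 2) ℂ) ^ k) = 0 := by
  apply Dop1_vanish
  intro a b
  rw [coeff_X1_pow]
  simp

lemma Dop2_coeff_form (mm rr : ℕ) (p : MvPolynomial (Fin 2) ℂ) (e f : ℕ) :
    coeff (E e f) ((Dop (τ := Fin 2) (Finsupp.single 0 rr) (Finsupp.single 1 mm)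
        + Dop (τ := Fin 2) (Finsupp.single 1 rr) (Finsupp.single 0 mm)) p) =
    (if rr ≤ e then (∏ j ∈ Finset.range mm, ((f : ℂ) + j + 1)) * coeff (E (e - rr) (f + mm)) p
      else 0) +
    (if rr ≤ f then (∏ j ∈ Finset.range mm, ((e : ℂ) + j + 1)) * coeff (E (e + mm) (f - rr)) p
      else 0) := by
  rw [LinearMap.add_apply, coeff_add, coeff_Dop, coeff_Dop]
  simp only [single_zero_eq_E, single_one_eq_E, E_apply_zero, E_apply_one, E_sub, E_le_E,
    Nat.zero_le, and_true, true_and, tsub_zero, E_add, Finset.range_zero, Finset.prod_empty,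
    one_mul, add_zero, zero_add]

lemma Dop2_X0 (mm rr k : ℕ) (hm : 1 ≤ mm) (hk : k < mm) :
    (Dop (τ := Fin 2) (Finsupp.single 0 rr) (Finsupp.single 1 mm)
        + Dop (τ := Fin 2) (Finsupp.single 1 rr) (Finsupp.single 0 mm))
      ((X (0 : Fin 2) : MvPolynomial (Fin 2) ℂ) ^ k) = 0 := by
  apply MvPolynomial.ext
  intro γ
  rw [eq_E_self γ, Dop2_coeff_form, coeff_zero]
  have c1 : coeff (E (γ 0 - rr) (γ 1 + mm)) ((X (0 : Fin 2) : MvPolynomial (Fin 2) ℂ) ^ k) = 0 := by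
    rw [coeff_X0_pow]; simp; omega
  have c2 : coeff (E (γ 0 + mm) (γ 1 - rr)) ((X (0 : Fin 2) : MvPolynomial (Fin 2) ℂ) ^ k) = 0 := by
    rw [coeff_X0_pow]; simp; omega
  rw [c1, c2]
  simp

lemma Dop2_X1 (mm rr k : ℕ) (hm : 1 ≤ mm) (hk : k < mm) :
    (Dop (τ := Fin 2) (Finsupp.single 0 rr) (Finsupp.single 1 mm)
        + Dop (τ := Fin 2) (Finsupp.single 1 rr) (Finsupp.single 0 mm))
      ((X (1 : Fin 2) : MvPolynomial (Fin 2) ℂ) ^ k) = 0 := by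
  apply MvPolynomial.ext
  intro γ
  rw [eq_E_self γ, Dop2_coeff_form, coeff_zero]
  have c1 : coeff (E (γ 0 - rr) (γ 1 + mm)) ((X (1 : Fin 2) : MvPolynomial (Fin 2) ℂ) ^ k) = 0 := by
    rw [coeff_X1_pow]; simp; omega
  have c2 : coeff (E (γ 0 + mm) (γ 1 - rr)) ((X (1 : Fin 2) : MvPolynomial (Fin 2) ℂ) ^ k) = 0 := by
    rw [coeff_X1_pow]; simp; omega
  rw [c1, c2]
  simp

lemma Dop2_diff (mm rr : ℕ) (hm : 1 ≤ mm) :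
    (Dop (τ := Fin 2) (Finsupp.single 0 rr) (Finsupp.single 1 mm)
        + Dop (τ := Fin 2) (Finsupp.single 1 rr) (Finsupp.single 0 mm))
      ((X (0 : Fin 2) : MvPolynomial (Fin 2) ℂ) ^ (rr + mm)
        - (X (1 : Fin 2) : MvPolynomial (Fin 2) ℂ) ^ (rr + mm)) = 0 := by
  apply MvPolynomial.ext
  intro γ
  rw [eq_E_self γ, Dop2_coeff_form, coeff_zero]
  rw [coeff_sub, coeff_sub, coeff_X0_pow, coeff_X0_pow, coeff_X1_pow, coeff_X1_pow]
  split_ifs <;>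
    first
    | (exfalso; omega)
    | ring1
    | (have e0 : γ 0 = rr := by omega
       have e1 : γ 1 = rr := by omega
       rw [e0, e1]; ring)

/-! ### Sum-evaluation lemmas -/

lemma sum_pickL (s : Finset ℕ) (a : ℕ) (Q : Prop) [Decidable Q] (c : ℕ → ℂ) :
    (∑ k ∈ s, c k * (if a = k ∧ Q then 1 else 0)) = if a ∈ s ∧ Q then c a else 0 := by
  simp only [mul_ite, mul_one, mul_zero]
  by_cases hq : Q
  · simp only [hq, and_true]
    exact Finset.sum_ite_eq s a c
  · simp [hq]

lemma sum_pickR (s : Finset ℕ) (b : ℕ) (Q : Prop) [Decidable Q] (c : ℕ → ℂ) :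
    (∑ k ∈ s, c k * (if Q ∧ b = k then 1 else 0)) = if b ∈ s ∧ Q then c b else 0 := by
  simp only [mul_ite, mul_one, mul_zero]
  by_cases hq : Q
  · simp only [hq, true_and, and_true]
    exact Finset.sum_ite_eq s b c
  · simp [hq]

/-! ### The kernel -/

/-! ### The explicit basis family -/

/-- The basis family for `Kker n`. -/
noncomputable def Bgen (n : ℕ) : Fin (n / 2 + 1) ⊕ Fin (n / 2) ⊕ Unit → MvPolynomial (Fin 2) ℂ :=
  Sum.elim (fun i => X 0 ^ (i : ℕ))
    (Sum.elim (fun i => X 1 ^ ((i : ℕ) + 1)) fun _ => X 0 ^ n - X 1 ^ n)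

/-- The dual exponent family. -/
noncomputable def cidx (n : ℕ) : Fin (n / 2 + 1) ⊕ Fin (n / 2) ⊕ Unit → (Fin 2 →₀ ℕ) :=
  Sum.elim (fun i => E (i : ℕ) 0) (Sum.elim (fun i => E 0 ((i : ℕ) + 1)) fun _ => E n 0)

lemma coeff_Bgen (n : ℕ) (hn : 3 ≤ n) (i i' : Fin (n / 2 + 1) ⊕ Fin (n / 2) ⊕ Unit) :
    coeff (cidx n i') (Bgen n i) = if i' = i then 1 else 0 := by
  have hlt : n / 2 < n := by omega
  rcases i with j | j | j <;> rcases i' with k | k | k <;>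
    simp only [Bgen, cidx, Sum.elim_inl, Sum.elim_inr, coeff_X0_pow, coeff_X1_pow, coeff_sub,
      Sum.inl.injEq, Sum.inr.injEq, reduceCtorEq, if_false, eq_iff_true_of_subsingleton,
      if_true]
  · simp [Fin.val_inj]
  · simp
  · have hj := j.isLt
    rw [if_neg (by simp; omega)]
  · simp
  · simp [Fin.val_inj]
  · simp
  · have hk := k.isLt
    rw [if_neg (by simp; omega), if_neg (by omega)]
    ring
  · have hk := k.isLt
    rw [if_neg (by simp), if_neg (by simp; omega)]
    ring
  · rw [if_pos ⟨trivial, trivial⟩, if_neg (by omega)]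
    ring

/-- The common kernel of `∂∂̄` and `z^{n-m}∂̄^m + z̄^{n-m}∂^m` (`m = ⌊n/2⌋ + 1`) has basis
`{1, z, …, z^{⌊n/2⌋}, z̄, …, z̄^{⌊n/2⌋}, zⁿ − z̄ⁿ}`: it is spanned by this set and has
dimension `2⌊n/2⌋ + 2`. -/
theorem stmt_13 (n : ℕ) (hn : 3 ≤ n) :
    Kker n =
      Submodule.span ℂ
        ({P : MvPolynomial (Fin 2) ℂ | ∃ k ≤ n / 2, P = (MvPolynomial.X 0) ^ k} ∪
          {P | ∃ k, 1 ≤ k ∧ k ≤ n / 2 ∧ P = (MvPolynomial.X 1) ^ k} ∪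
          {(MvPolynomial.X 0) ^ n - (MvPolynomial.X 1) ^ n}) ∧
    Module.finrank ℂ ↥(Kker n) = 2 * (n / 2) + 2 := by
  have hm1 : 1 ≤ n / 2 + 1 := by omega
  have hrm : (n - (n / 2 + 1)) + (n / 2 + 1) = n := by omega
  have hr1 : 1 ≤ n - (n / 2 + 1) := by omega
  -- Part 1 : Kker n = span
  have hmain : Kker n =
      Submodule.span ℂ
        ({P : MvPolynomial (Fin 2) ℂ | ∃ k ≤ n / 2, P = (MvPolynomial.X 0) ^ k} ∪
          {P | ∃ k, 1 ≤ k ∧ k ≤ n / 2 ∧ P = (MvPolynomial.X 1) ^ k} ∪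
          {(MvPolynomial.X 0) ^ n - (MvPolynomial.X 1) ^ n}) := by
    apply le_antisymm
    · intro P hP
      rw [Kker, Submodule.mem_inf, LinearMap.mem_ker, LinearMap.mem_ker] at hP
      obtain ⟨hP1, hP2⟩ := hP
      have hcross : ∀ a b : ℕ, 1 ≤ a → 1 ≤ b → coeff (E a b) P = 0 := by
        intro a b ha hb
        have := ker1_coeff hP1 (a - 1) (b - 1)
        rwa [show a - 1 + 1 = a by omega, show b - 1 + 1 = b by omega] at this
      have h2 := ker2_coeff hP2
      have hA1 : ∀ a : ℕ, n / 2 < a → a ≠ n → coeff (E a 0) P = 0 := by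
        intro a ha han
        have h := h2 (a - (n / 2 + 1)) (n - (n / 2 + 1))
        rw [if_pos le_rfl, Nat.sub_self,
          show a - (n / 2 + 1) + (n / 2 + 1) = a by omega] at h
        by_cases hcase : n < a
        · rw [if_pos (by omega),
            show a - (n / 2 + 1) - (n - (n / 2 + 1)) = a - n by omega,
            show (n - (n / 2 + 1)) + (n / 2 + 1) = n from hrm,
            hcross (a - n) n (by omega) (by omega), mul_zero, zero_add] at h
          rcases mul_eq_zero.1 h with h | h
          · exact absurd h (prod_factors_ne_zero _ _)
          · exact h
        · rw [if_neg (by omega), zero_add] at h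
          rcases mul_eq_zero.1 h with h | h
          · exact absurd h (prod_factors_ne_zero _ _)
          · exact h
      have hA2 : ∀ b : ℕ, n / 2 < b → b ≠ n → coeff (E 0 b) P = 0 := by
        intro b hb hbn
        have h := h2 (n - (n / 2 + 1)) (b - (n / 2 + 1))
        rw [if_pos le_rfl, Nat.sub_self,
          show b - (n / 2 + 1) + (n / 2 + 1) = b by omega] at h
        by_cases hcase : n < b
        · rw [if_pos (by omega),
            show b - (n / 2 + 1) - (n - (n / 2 + 1)) = b - n by omega,
            show (n - (n / 2 + 1)) + (n / 2 + 1) = n from hrm,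
            hcross n (b - n) (by omega) (by omega), mul_zero, add_zero] at h
          rcases mul_eq_zero.1 h with h | h
          · exact absurd h (prod_factors_ne_zero _ _)
          · exact h
        · rw [if_neg (by omega), add_zero] at h
          rcases mul_eq_zero.1 h with h | h
          · exact absurd h (prod_factors_ne_zero _ _)
          · exact h
      have hA3 : coeff (E 0 n) P = -coeff (E n 0) P := by
        have h := h2 (n - (n / 2 + 1)) (n - (n / 2 + 1))
        rw [if_pos le_rfl, if_pos le_rfl, Nat.sub_self,
          show (n - (n / 2 + 1)) + (n / 2 + 1) = n from hrm, ← mul_add] at h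
        rcases mul_eq_zero.1 h with h | h
        · exact absurd h (prod_factors_ne_zero _ _)
        · exact eq_neg_of_add_eq_zero_left h
      -- P equals the explicit combination
      have hPeq : P =
          (∑ k ∈ Finset.range (n / 2 + 1),
              coeff (E k 0) P • (X (0 : Fin 2) : MvPolynomial (Fin 2) ℂ) ^ k)
          + (∑ k ∈ Finset.Icc 1 (n / 2),
              coeff (E 0 k) P • (X (1 : Fin 2) : MvPolynomial (Fin 2) ℂ) ^ k)
          + coeff (E n 0) P •
              ((X (0 : Fin 2) : MvPolynomial (Fin 2) ℂ) ^ n - (X (1 : Fin 2)) ^ n) := by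
        apply MvPolynomial.ext
        intro γ
        rw [eq_E_self γ]
        generalize γ 0 = a
        generalize γ 1 = b
        rw [coeff_add, coeff_add, coeff_sum, coeff_sum, coeff_smul, coeff_sub,
          coeff_X0_pow, coeff_X1_pow]
        simp only [coeff_smul, smul_eq_mul, coeff_X0_pow, coeff_X1_pow]
        rw [sum_pickL, sum_pickR]
        simp only [Finset.mem_range, Finset.mem_Icc]
        by_cases hb : b = 0
        · subst hb
          by_cases h1 : a ≤ n / 2
          · rw [if_pos ⟨by omega, rfl⟩, if_neg (by omega), if_neg (by omega),
              if_neg (by omega)]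
            ring
          · by_cases h2a : a = n
            · subst h2a
              rw [if_neg (by omega), if_neg (by omega), if_pos ⟨rfl, rfl⟩,
                if_neg (by omega)]
              ring
            · rw [hA1 a (by omega) h2a, if_neg (by omega), if_neg (by omega),
                if_neg (by omega), if_neg (by omega)]
              ring
        · by_cases ha : a = 0
          · subst ha
            by_cases h1 : b ≤ n / 2
            · rw [if_neg (by omega), if_pos ⟨by omega, rfl⟩, if_neg (by omega),
                if_neg (by omega)]
              ring
            · by_cases h2b : b = n
              · subst h2b
                rw [if_neg (by omega), if_neg (by omega), if_neg (by omega),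
                  if_pos ⟨rfl, rfl⟩, hA3]
                ring
              · rw [hA2 b (by omega) h2b, if_neg (by omega), if_neg (by omega),
                  if_neg (by omega), if_neg (by omega)]
                ring
          · rw [hcross a b (by omega) (by omega), if_neg (by omega), if_neg (by omega),
              if_neg (by omega), if_neg (by omega)]
            ring
      rw [hPeq]
      apply Submodule.add_mem
      apply Submodule.add_mem
      · apply Submodule.sum_mem
        intro k hk
        rw [Finset.mem_range] at hk
        exact Submodule.smul_mem _ _
          (Submodule.subset_span (Or.inl (Or.inl ⟨k, by omega, rfl⟩)))
      · apply Submodule.sum_mem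
        intro k hk
        rw [Finset.mem_Icc] at hk
        exact Submodule.smul_mem _ _
          (Submodule.subset_span (Or.inl (Or.inr ⟨k, hk.1, hk.2, rfl⟩)))
      · exact Submodule.smul_mem _ _ (Submodule.subset_span (Or.inr rfl))
    · rw [Submodule.span_le]
      rintro x ((⟨k, hk, rfl⟩ | ⟨k, hk1, hk2, rfl⟩) | rfl) <;>
        rw [SetLike.mem_coe, Kker, Submodule.mem_inf, LinearMap.mem_ker, LinearMap.mem_ker]
      · exact ⟨Dop1_X0 k, Dop2_X0 (n / 2 + 1) (n - (n / 2 + 1)) k hm1 (by omega)⟩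
      · exact ⟨Dop1_X1 k, Dop2_X1 (n / 2 + 1) (n - (n / 2 + 1)) k hm1 (by omega)⟩
      · constructor
        · rw [map_sub, Dop1_X0 n, Dop1_X1 n, sub_zero]
        · have h := Dop2_diff (n / 2 + 1) (n - (n / 2 + 1)) hm1
          rwa [hrm] at h
  refine ⟨hmain, ?_⟩
  -- Part 2 : the dimension
  have hrange : Set.range (Bgen n) =
      ({P : MvPolynomial (Fin 2) ℂ | ∃ k ≤ n / 2, P = (MvPolynomial.X 0) ^ k} ∪
        {P | ∃ k, 1 ≤ k ∧ k ≤ n / 2 ∧ P = (MvPolynomial.X 1) ^ k} ∪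
        {(MvPolynomial.X 0) ^ n - (MvPolynomial.X 1) ^ n}) := by
    ext P
    simp only [Set.mem_range, Set.mem_union, Set.mem_setOf_eq, Set.mem_singleton_iff]
    constructor
    · rintro ⟨(i | i | i), rfl⟩
      · exact Or.inl (Or.inl ⟨(i : ℕ), by omega, rfl⟩)
      · exact Or.inl (Or.inr ⟨(i : ℕ) + 1, by omega, by omega, rfl⟩)
      · exact Or.inr rfl
    · rintro ((⟨k, hk, rfl⟩ | ⟨k, hk1, hk2, rfl⟩) | rfl)
      · exact ⟨Sum.inl ⟨k, by omega⟩, rfl⟩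
      · refine ⟨Sum.inr (Sum.inl ⟨k - 1, by omega⟩), ?_⟩
        simp only [Bgen, Sum.elim_inr, Sum.elim_inl]
        rw [show (⟨k - 1, by omega⟩ : Fin (n / 2)).val + 1 = k by simp; omega]
      · exact ⟨Sum.inr (Sum.inr ()), rfl⟩
  have hli : LinearIndependent ℂ (Bgen n) := by
    apply LinearIndependent.of_comp
      (LinearMap.pi fun i => MvPolynomial.lcoeff ℂ (cidx n i))
    have hcomp : (⇑(LinearMap.pi fun i => MvPolynomial.lcoeff ℂ (cidx n i)) ∘ Bgen n) =
        ⇑(Pi.basisFun ℂ (Fin (n / 2 + 1) ⊕ Fin (n / 2) ⊕ Unit)) := by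
      funext i
      funext i'
      simp only [Function.comp_apply, LinearMap.pi_apply, lcoeff_apply,
        Pi.basisFun_apply, Pi.single_apply]
      exact coeff_Bgen n hn i i'
    rw [hcomp]
    exact (Pi.basisFun ℂ _).linearIndependent
  rw [hmain, ← hrange, finrank_span_eq_card hli]
  simp only [Fintype.card_sum, Fintype.card_fin, Fintype.card_unit]
  omega
end

section
/- Let G be a finite Coxeter group acting via its canonical reflection representation on V, A the polynomial ring on V, and Ā = A/(A·A₊^G) the coinvariant algebra, graded as Ā = ⊕ Ā_i. For an irreducible representation U of G of degree d, write the fake degree f_U(t) = ∑_{i=1}^d t^{a_i}, where a₁ ≤ … ≤ a_d are the degrees (with multiplicity) of homogeneous components of Ā containing a copy of U. If f_U(t) = t^{q}·g(t) with g(0) ≠ 0, then q equals the smallest degree p(U) of a homogeneous component of A containing a subrepresentation isomorphic to U, and g(0) equals the multiplicity of U in A_{p(U)}. -/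
open MvPolynomial

def IsIrred {G V : Type*} [Group G] [AddCommGroup V] [Module ℂ V]
    (σ : Representation ℂ G V) : Prop :=
  (⊥ : Submodule ℂ V) ≠ ⊤ ∧
    ∀ p : Submodule ℂ V, (∀ g, p.map (σ g) ≤ p) → p = ⊥ ∨ p = ⊤

def degF {τ : Type*} (α : τ →₀ ℕ) : ℕ := α.sum fun _ k => k

noncomputable def negOps (τ : Type*) [Fintype τ] [DecidableEq τ] :
    Submodule ℂ (Module.End ℂ (MvPolynomial τ ℂ)) :=
  Submodule.span ℂ {D | ∃ α β, degF α < degF β ∧ D = Dop α β}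

noncomputable def Zset {G τ : Type*} [Group G] [Fintype τ] [DecidableEq τ]
    (a : G → (MvPolynomial τ ℂ →ₐ[ℂ] MvPolynomial τ ℂ)) :
    Set (Module.End ℂ (MvPolynomial τ ℂ)) :=
  {D | D ∈ negOps τ ∧ ∀ g, (a g).toLinearMap ∘ₗ D = D ∘ₗ (a g).toLinearMap}

noncomputable def Nmod {G τ : Type*} [Group G] [Fintype τ] [DecidableEq τ]
    (a : G → (MvPolynomial τ ℂ →ₐ[ℂ] MvPolynomial τ ℂ)) : Submodule ℂ (MvPolynomial τ ℂ) :=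
  ⨅ D ∈ Zset a, LinearMap.ker D

noncomputable def EHom {G Q : Type*} [Group G] [AddCommGroup Q] [Module ℂ Q] {d : ℕ}
    (σ : Representation ℂ G (Fin d → ℂ)) (aQ : G → Q →ₗ[ℂ] Q) (M : Submodule ℂ Q) :
    Submodule ℂ ((Fin d → ℂ) →ₗ[ℂ] Q) where
  carrier := {f | (∀ g v, f (σ g v) = aQ g (f v)) ∧ ∀ v, f v ∈ M}
  add_mem' := by
    rintro f g ⟨hf1, hf2⟩ ⟨hg1, hg2⟩
    exact ⟨fun a v => by simp [hf1 a v, hg1 a v], fun v => M.add_mem (hf2 v) (hg2 v)⟩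
  zero_mem' := ⟨fun g v => by simp, fun v => by simp⟩
  smul_mem' := by
    rintro c f ⟨h1, h2⟩
    exact ⟨fun g v => by simp [h1 g v], fun v => M.smul_mem c (h2 v)⟩

noncomputable def mult {G Q : Type*} [Group G] [AddCommGroup Q] [Module ℂ Q] {d : ℕ}
    (σ : Representation ℂ G (Fin d → ℂ)) (aQ : G → Q →ₗ[ℂ] Q) (M : Submodule ℂ Q) : ℕ :=
  Module.finrank ℂ (EHom σ aQ M)

noncomputable def IsGelfand {G : Type*} [Group G] {τ : Type*} [Fintype τ] [DecidableEq τ]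
    (a : G → (MvPolynomial τ ℂ →ₐ[ℂ] MvPolynomial τ ℂ)) : Prop :=
  ∀ (d : ℕ) (σ : Representation ℂ G (Fin d → ℂ)), IsIrred σ →
    mult σ (fun g => (a g).toLinearMap) (Nmod a) = 1

noncomputable def pval {G : Type*} [Group G] {τ : Type*} [Fintype τ] [DecidableEq τ]
    (a : G → (MvPolynomial τ ℂ →ₐ[ℂ] MvPolynomial τ ℂ)) {d : ℕ}
    (σ : Representation ℂ G (Fin d → ℂ)) : ℕ :=
  sInf {m | 0 < mult σ (fun g => (a g).toLinearMap) (MvPolynomial.homogeneousSubmodule τ ℂ m)}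

noncomputable def Ciso {G : Type*} [Group G] {τ : Type*} [Fintype τ] [DecidableEq τ]
    (a : G → (MvPolynomial τ ℂ →ₐ[ℂ] MvPolynomial τ ℂ)) {d : ℕ}
    (σ : Representation ℂ G (Fin d → ℂ)) : Submodule ℂ (MvPolynomial τ ℂ) :=
  ⨆ f : EHom σ (fun g => (a g).toLinearMap)
      (MvPolynomial.homogeneousSubmodule τ ℂ (pval a σ)), LinearMap.range f.1

/-- The induced action on the quotient `Ā = A ⧸ I` of the polynomial ring by a G-stable
ideal (e.g. the ideal generated by the non-constant invariants). -/
noncomputable def actQ {G τ : Type*} [Group G] [Fintype τ] [DecidableEq τ]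
    (a : G → (MvPolynomial τ ℂ →ₐ[ℂ] MvPolynomial τ ℂ)) (Isub : Submodule ℂ (MvPolynomial τ ℂ))
    (hI : ∀ g x, x ∈ Isub → a g x ∈ Isub) (g : G) :
    (MvPolynomial τ ℂ ⧸ Isub) →ₗ[ℂ] (MvPolynomial τ ℂ ⧸ Isub) :=
  Submodule.mapQ Isub Isub (a g).toLinearMap (fun x hx => hI g x hx)

/-- The image `Ā_m` of the homogeneous component `A_m` in the quotient `Ā = A ⧸ I`. -/
noncomputable def Abar {τ : Type*} [Fintype τ] [DecidableEq τ]
    (Isub : Submodule ℂ (MvPolynomial τ ℂ)) (m : ℕ) :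
    Submodule ℂ (MvPolynomial τ ℂ ⧸ Isub) :=
  (MvPolynomial.homogeneousSubmodule τ ℂ m).map Isub.mkQ

/-- The multiplicity of the irreducible representation `σ` in the homogeneous component
`Ā_m` of the coinvariant algebra; the fake degree of `σ` is `f_σ(t) = ∑_m multQ(m)·t^m`. -/
noncomputable def multQ {G τ : Type*} [Group G] [Fintype τ] [DecidableEq τ]
    (a : G → (MvPolynomial τ ℂ →ₐ[ℂ] MvPolynomial τ ℂ)) (Isub : Submodule ℂ (MvPolynomial τ ℂ))
    (hI : ∀ g x, x ∈ Isub → a g x ∈ Isub) {d : ℕ}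
    (σ : Representation ℂ G (Fin d → ℂ)) (m : ℕ) : ℕ :=
  mult σ (actQ a Isub hI) (Abar Isub m)

section ActLemmas
variable {G : Type*} [Group G] {n : ℕ} (ρ : Representation ℂ G (Fin n → ℂ))

lemma pi_expand (v : Fin n → ℂ) : v = ∑ j, v j • (Pi.single j (1:ℂ) : Fin n → ℂ) := by
  ext i
  simp [Pi.single_apply, Finset.sum_ite_eq']

lemma act_one : act ρ (1 : G) = AlgHom.id ℂ _ := by
  apply MvPolynomial.algHom_ext
  intro i
  simp [act, Pi.single_apply, Finset.sum_ite_eq']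

lemma act_comp (g h : G) : (act ρ g).comp (act ρ h) = act ρ (g * h) := by
  apply MvPolynomial.algHom_ext
  intro i
  simp only [AlgHom.comp_apply, act, aeval_X, map_sum, map_smul, Finset.smul_sum, smul_smul]
  rw [Finset.sum_comm]
  refine Finset.sum_congr rfl fun j _ => ?_
  rw [← Finset.sum_smul]
  congr 1
  have : ρ (g * h)⁻¹ (Pi.single j 1) = ρ h⁻¹ (ρ g⁻¹ (Pi.single j 1)) := by
    rw [mul_inv_rev, map_mul]; rfl
  conv_rhs => rw [this, pi_expand (ρ g⁻¹ (Pi.single j 1)), map_sum]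
  simp only [map_smul, Finset.sum_apply, Pi.smul_apply, smul_eq_mul]
  exact Finset.sum_congr rfl fun x _ => mul_comm _ _

lemma act_act (g h : G) (P : MvPolynomial (Fin n) ℂ) :
    act ρ g (act ρ h P) = act ρ (g * h) P :=
  DFunLike.congr_fun (act_comp ρ g h) P

lemma act_inv_act (g : G) (P : MvPolynomial (Fin n) ℂ) : act ρ g (act ρ g⁻¹ P) = P := by
  rw [act_act, mul_inv_cancel, act_one]; rfl

lemma act_mem_homog {m : ℕ} {P : MvPolynomial (Fin n) ℂ}
    (hP : P ∈ homogeneousSubmodule (Fin n) ℂ m) (g : G) :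
    act ρ g P ∈ homogeneousSubmodule (Fin n) ℂ m := by
  rw [mem_homogeneousSubmodule] at hP ⊢
  have hg : ∀ i, ((∑ j, ρ g⁻¹ (Pi.single j 1) i • X j : MvPolynomial (Fin n) ℂ)).IsHomogeneous 1 := by
    intro i
    apply IsHomogeneous.sum
    intro j _
    rw [smul_eq_C_mul]
    exact isHomogeneous_C_mul_X _ _
  have := hP.aeval (fun i => ∑ j, ρ g⁻¹ (Pi.single j 1) i • X j) hg
  rw [one_mul] at this
  exact this

lemma act_homogeneousComponent (g : G) (m : ℕ) (P : MvPolynomial (Fin n) ℂ) :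
    act ρ g (homogeneousComponent m P) = homogeneousComponent m (act ρ g P) := by
  induction P using MvPolynomial.induction_on' with
  | monomial α c =>
    have h1 : (monomial α c : MvPolynomial (Fin n) ℂ) ∈ homogeneousSubmodule (Fin n) ℂ α.degree :=
      isHomogeneous_monomial c rfl
    rw [homogeneousComponent_of_mem h1, homogeneousComponent_of_mem (act_mem_homog ρ h1 g)]
    split <;> simp
  | add p q hp hq => simp only [map_add, hp, hq]

end ActLemmas

section Avg
variable {G : Type*} [Group G] [Fintype G]
variable {V W : Type*} [AddCommGroup V] [Module ℂ V] [AddCommGroup W] [Module ℂ W]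
variable (τV : G → V →ₗ[ℂ] V) (τW : G → W →ₗ[ℂ] W)

noncomputable def avg (f₀ : V →ₗ[ℂ] W) : V →ₗ[ℂ] W :=
  ((Fintype.card G : ℂ)⁻¹) • ∑ g : G, τW g ∘ₗ f₀ ∘ₗ τV g⁻¹

variable (hV : ∀ g h : G, τV g ∘ₗ τV h = τV (g * h)) (hW : ∀ g h : G, τW g ∘ₗ τW h = τW (g * h))

include hV hW in
lemma avg_equivariant (f₀ : V →ₗ[ℂ] W) (h : G) (v : V) :
    avg τV τW f₀ (τV h v) = τW h (avg τV τW f₀ v) := by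
  unfold avg
  simp only [LinearMap.smul_apply, LinearMap.sum_apply, map_smul, map_sum, LinearMap.comp_apply]
  congr 1
  rw [← Equiv.sum_comp (Equiv.mulLeft h) (fun g => τW g (f₀ (τV g⁻¹ (τV h v))))]
  refine Finset.sum_congr rfl fun g _ => ?_
  simp only [Equiv.coe_mulLeft]
  have e1 : τV (h * g)⁻¹ (τV h v) = τV g⁻¹ v := by
    rw [← LinearMap.comp_apply, hV]
    congr 1
    group
  have e2 : τW (h * g) (f₀ (τV g⁻¹ v)) = τW h (τW g (f₀ (τV g⁻¹ v))) := by
    rw [← hW, LinearMap.comp_apply]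
  rw [e1, e2]

lemma avg_mem (M : Submodule ℂ W) (hM : ∀ g w, w ∈ M → τW g w ∈ M)
    (f₀ : V →ₗ[ℂ] W) (hf₀ : ∀ v, f₀ v ∈ M) (v : V) : avg τV τW f₀ v ∈ M := by
  unfold avg
  rw [LinearMap.smul_apply, LinearMap.sum_apply]
  exact M.smul_mem _ (M.sum_mem fun g _ => hM g _ (hf₀ _))

include hV in
lemma avg_comp (hV1 : τV 1 = LinearMap.id)
    {Z : Type*} [AddCommGroup Z] [Module ℂ Z] (τZ : G → Z →ₗ[ℂ] Z) (π : W →ₗ[ℂ] Z)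
    (hπ : ∀ (g : G) (w : W), π (τW g w) = τZ g (π w)) (f₀ : V →ₗ[ℂ] W)
    (heq : ∀ (g : G) (v : V), π (f₀ (τV g v)) = τZ g (π (f₀ v))) (v : V) :
    π (avg τV τW f₀ v) = π (f₀ v) := by
  unfold avg
  rw [LinearMap.smul_apply, LinearMap.sum_apply, map_smul, map_sum]
  have key : ∀ g : G, π (( τW g ∘ₗ f₀ ∘ₗ τV g⁻¹) v) = π (f₀ v) := by
    intro g
    have hv : τV g (τV g⁻¹ v) = v := by
      rw [← LinearMap.comp_apply, hV, mul_inv_cancel, hV1, LinearMap.id_apply]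
    rw [LinearMap.comp_apply, LinearMap.comp_apply, hπ, ← heq, hv]
  rw [Finset.sum_congr rfl fun g _ => key g, Finset.sum_const, Finset.card_univ,
    ← Nat.cast_smul_eq_nsmul ℂ, smul_smul, inv_mul_cancel₀, one_smul]
  exact Nat.cast_ne_zero.2 Fintype.card_ne_zero

include hV in
lemma avg_fixed (hV1 : τV 1 = LinearMap.id) (f₀ : V →ₗ[ℂ] V) (x : V)
    (hfix : ∀ g : G, f₀ (τV g⁻¹ x) = τV g⁻¹ x) : avg τV τV f₀ x = x := by
  unfold avg
  rw [LinearMap.smul_apply, LinearMap.sum_apply]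
  have key : ∀ g : G, ((τV g ∘ₗ f₀ ∘ₗ τV g⁻¹) x) = x := by
    intro g
    rw [LinearMap.comp_apply, LinearMap.comp_apply, hfix, ← LinearMap.comp_apply, hV,
      mul_inv_cancel, hV1, LinearMap.id_apply]
  rw [Finset.sum_congr rfl fun g _ => key g, Finset.sum_const, Finset.card_univ,
    ← Nat.cast_smul_eq_nsmul ℂ, smul_smul, inv_mul_cancel₀, one_smul]
  exact Nat.cast_ne_zero.2 Fintype.card_ne_zero

end Avg

section EHomFacts
variable {G Q : Type*} [Group G] [AddCommGroup Q] [Module ℂ Q] {d : ℕ}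
  (σ : Representation ℂ G (Fin d → ℂ)) (aQ : G → Q →ₗ[ℂ] Q) (M : Submodule ℂ Q)

lemma mem_EHom (f : (Fin d → ℂ) →ₗ[ℂ] Q) :
    f ∈ EHom σ aQ M ↔ (∀ g v, f (σ g v) = aQ g (f v)) ∧ ∀ v, f v ∈ M := Iff.rfl

lemma fd_EHom [FiniteDimensional ℂ M] : FiniteDimensional ℂ (EHom σ aQ M) := by
  let Ψ : EHom σ aQ M →ₗ[ℂ] ((Fin d → ℂ) →ₗ[ℂ] M) :=
    { toFun := fun f => (f.1).codRestrict M f.2.2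
      map_add' := by intro f g; ext v; rfl
      map_smul' := by intro c f; ext v; rfl }
  have hΨ : Function.Injective Ψ := by
    intro f g h
    apply Subtype.ext
    refine LinearMap.ext fun v => ?_
    exact congrArg Subtype.val (LinearMap.congr_fun h v)
  exact FiniteDimensional.of_injective Ψ hΨ

lemma mult_pos_of [FiniteDimensional ℂ M] (f : (Fin d → ℂ) →ₗ[ℂ] Q)
    (hf : f ∈ EHom σ aQ M) (hf0 : f ≠ 0) : 0 < mult σ aQ M := by
  have := fd_EHom σ aQ M
  rcases Nat.eq_zero_or_pos (mult σ aQ M) with h | h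
  · exfalso
    have : EHom σ aQ M = ⊥ := Submodule.finrank_eq_zero.mp h
    rw [this] at hf
    exact hf0 (Submodule.mem_bot ℂ |>.mp hf)
  · exact h

lemma exists_ne_zero_of_mult_pos [FiniteDimensional ℂ M] (h : 0 < mult σ aQ M) :
    ∃ f ∈ EHom σ aQ M, f ≠ 0 := by
  have := fd_EHom σ aQ M
  have hne : EHom σ aQ M ≠ ⊥ := by
    intro hbot
    rw [mult, hbot] at h
    simp [finrank_bot] at h
  rcases Submodule.ne_bot_iff _ |>.mp hne with ⟨f, hf, hf0⟩
  exact ⟨f, hf, hf0⟩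

lemma mult_eq_zero_iff [FiniteDimensional ℂ M] : mult σ aQ M = 0 ↔ EHom σ aQ M = ⊥ := by
  have := fd_EHom σ aQ M
  exact Submodule.finrank_eq_zero

end EHomFacts

lemma fd_homog (n m : ℕ) : FiniteDimensional ℂ (homogeneousSubmodule (Fin n) ℂ m) :=
  Submodule.finiteDimensional_of_le (S₂ := restrictTotalDegree (Fin n) ℂ m)
    (fun p hp => (mem_restrictTotalDegree _ _ _).2
      (((mem_homogeneousSubmodule _ _).1 hp).totalDegree_le))

section Tspan
variable {G : Type*} [Group G] {n : ℕ} (ρ : Representation ℂ G (Fin n → ℂ))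

/-- Span of products p·h with h a positive-degree homogeneous invariant. -/
noncomputable def Tspan (m : ℕ) : Submodule ℂ (MvPolynomial (Fin n) ℂ) :=
  Submodule.span ℂ {y | ∃ j, 1 ≤ j ∧ j ≤ m ∧ ∃ p h, p ∈ homogeneousSubmodule (Fin n) ℂ (m - j) ∧
    h ∈ homogeneousSubmodule (Fin n) ℂ j ∧ (∀ g, act ρ g h = h) ∧ y = p * h}

lemma mul_mem_Tspan {i m : ℕ} {c y : MvPolynomial (Fin n) ℂ}
    (hc : c ∈ homogeneousSubmodule (Fin n) ℂ i) (hy : y ∈ Tspan ρ m) :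
    c * y ∈ Tspan ρ (i + m) := by
  refine Submodule.span_induction ?_ ?_ ?_ ?_ hy
  · rintro x ⟨j, hj1, hjm, p, h, hp, hh, hinv, rfl⟩
    rw [← mul_assoc]
    apply Submodule.subset_span
    refine ⟨j, hj1, by omega, c * p, h, ?_, hh, hinv, rfl⟩
    have : i + m - j = i + (m - j) := by omega
    rw [this, mem_homogeneousSubmodule]
    exact ((mem_homogeneousSubmodule _ _).1 hc).mul ((mem_homogeneousSubmodule _ _).1 hp)
  · simp
  · intro x z _ _ hx hz
    rw [mul_add]
    exact (Tspan ρ (i + m)).add_mem hx hz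
  · intro r x _ hx
    rw [mul_smul_comm]
    exact (Tspan ρ (i + m)).smul_mem r hx

lemma homogComp_mul_homog {i m : ℕ} {c : MvPolynomial (Fin n) ℂ}
    (hc : c ∈ homogeneousSubmodule (Fin n) ℂ i) (x : MvPolynomial (Fin n) ℂ) :
    homogeneousComponent m (c * x) =
      if i ≤ m then c * homogeneousComponent (m - i) x else 0 := by
  induction x using MvPolynomial.induction_on' with
  | monomial α e =>
    have hmono : (monomial α e : MvPolynomial (Fin n) ℂ) ∈
        homogeneousSubmodule (Fin n) ℂ α.degree := isHomogeneous_monomial e rfl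
    have hmul : c * monomial α e ∈ homogeneousSubmodule (Fin n) ℂ (i + α.degree) :=
      ((mem_homogeneousSubmodule _ _).1 hc).mul ((mem_homogeneousSubmodule _ _).1 hmono)
    rw [homogeneousComponent_of_mem hmul, homogeneousComponent_of_mem hmono]
    by_cases him : i ≤ m
    · by_cases heq : m = i + α.degree
      · have : m - i = α.degree := by omega
        simp [him, heq, this]
      · have : ¬ (m - i = α.degree) := by omega
        simp [him, heq, this]
    · have : ¬ (m = i + α.degree) := by omega
      simp [him, this]
  | add p q hp hq =>
    rw [mul_add, map_add, hp, hq, map_add]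
    split
    · rw [mul_add]
    · rw [add_zero]

lemma homogComp_mem_Tspan
    (S : Set (MvPolynomial (Fin n) ℂ))
    (hS : S = {P : MvPolynomial (Fin n) ℂ | (∀ g, act ρ g P = P) ∧ constantCoeff P = 0})
    {x : MvPolynomial (Fin n) ℂ} (hx : x ∈ Ideal.span S) (m : ℕ) :
    homogeneousComponent m x ∈ Tspan ρ m := by
  revert m
  refine Submodule.span_induction ?_ ?_ ?_ ?_ hx
  · intro y hy m
    subst hS
    obtain ⟨hinv, hcc⟩ := hy
    rcases Nat.eq_zero_or_pos m with rfl | hm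
    · rw [homogeneousComponent_zero]
      have : coeff 0 y = 0 := hcc
      simp [this]
    · apply Submodule.subset_span
      refine ⟨m, hm, le_refl m, 1, homogeneousComponent m y, ?_, homogeneousComponent_mem m y,
        ?_, (one_mul _).symm⟩
      · rw [Nat.sub_self, mem_homogeneousSubmodule]
        exact isHomogeneous_one _ _
      · intro g
        rw [act_homogeneousComponent, hinv g]
  · intro m; simp
  · intro y z _ _ hy hz m
    rw [map_add]
    exact (Tspan ρ m).add_mem (hy m) (hz m)
  · intro c y _ hy m
    rw [smul_eq_mul, ← sum_homogeneousComponent c, Finset.sum_mul, map_sum]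
    apply Submodule.sum_mem
    intro i _
    rw [homogComp_mul_homog (homogeneousComponent_mem i c)]
    split
    · rename_i him
      have hmem := mul_mem_Tspan ρ (homogeneousComponent_mem i c) (hy (m - i))
      rwa [show i + (m - i) = m by omega] at hmem
    · exact Submodule.zero_mem _

end Tspan
section Main
variable {G : Type*} [Group G] [Fintype G] {n : ℕ} (ρ : Representation ℂ G (Fin n → ℂ))

lemma aL_comp (g h : G) : (act ρ g).toLinearMap ∘ₗ (act ρ h).toLinearMap
    = (act ρ (g * h)).toLinearMap :=
  LinearMap.ext fun x => act_act ρ g h x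

lemma aL_one : (act ρ (1 : G)).toLinearMap = LinearMap.id :=
  LinearMap.ext fun x => by rw [act_one]; rfl

lemma sigma_comp {d : ℕ} (σ : Representation ℂ G (Fin d → ℂ)) (g h : G) :
    (σ g : (Fin d → ℂ) →ₗ[ℂ] (Fin d → ℂ)) ∘ₗ σ h = σ (g * h) := by
  rw [map_mul]; rfl

lemma sigma_one {d : ℕ} (σ : Representation ℂ G (Fin d → ℂ)) :
    (σ (1 : G) : (Fin d → ℂ) →ₗ[ℂ] (Fin d → ℂ)) = LinearMap.id := by
  rw [map_one]; rfl

lemma keyL {d : ℕ} (σ : Representation ℂ G (Fin d → ℂ)) (hσ : IsIrred σ)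
    (Isub : Submodule ℂ (MvPolynomial (Fin n) ℂ))
    (hIdef : Isub = Submodule.restrictScalars ℂ (Ideal.span
      {P : MvPolynomial (Fin n) ℂ | (∀ g, act ρ g P = P) ∧ MvPolynomial.constantCoeff P = 0}))
    {m : ℕ}
    (hlow : ∀ k, k < m →
      mult σ (fun g => (act ρ g).toLinearMap) (homogeneousSubmodule (Fin n) ℂ k) = 0)
    (f : (Fin d → ℂ) →ₗ[ℂ] MvPolynomial (Fin n) ℂ)
    (hfe : ∀ g v, f (σ g v) = act ρ g (f v))
    (hfm : ∀ v, f v ∈ homogeneousSubmodule (Fin n) ℂ m)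
    (hfI : ∀ v, f v ∈ Isub) : f = 0 := by
  by_contra hf0
  have hstab : ∀ g, (LinearMap.ker f).map (σ g) ≤ LinearMap.ker f := by
    intro g x hx
    rcases Submodule.mem_map.mp hx with ⟨v, hv, rfl⟩
    rw [LinearMap.mem_ker] at hv ⊢
    rw [hfe, hv, map_zero]
  rcases hσ.2 _ hstab with hker | hker
  swap
  · exact absurd (LinearMap.ker_eq_top.mp hker) hf0
  have hinj : Function.Injective f := LinearMap.ker_eq_bot.mp hker
  set aL : G → MvPolynomial (Fin n) ℂ →ₗ[ℂ] MvPolynomial (Fin n) ℂ :=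
    fun g => (act ρ g).toLinearMap with haL
  have haLcomp : ∀ g h : G, aL g ∘ₗ aL h = aL (g * h) := aL_comp ρ
  set W := LinearMap.range f with hW
  have hWstab : ∀ (g : G) x, x ∈ W → aL g x ∈ W := by
    rintro g x ⟨v, rfl⟩
    exact ⟨σ g v, hfe g v⟩
  obtain ⟨W', hcompl⟩ := Submodule.exists_isCompl W
  set π₀ : MvPolynomial (Fin n) ℂ →ₗ[ℂ] MvPolynomial (Fin n) ℂ :=
    W.subtype ∘ₗ W.projectionOnto W' hcompl with hπ₀
  set π := avg aL aL π₀ with hπdef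
  have hπ_fix : ∀ x ∈ W, π x = x := by
    intro x hx
    apply avg_fixed aL haLcomp (aL_one ρ) π₀ x
    intro g
    have hmem : aL g⁻¹ x ∈ W := hWstab g⁻¹ x hx
    have h2 : π₀ ((⟨aL g⁻¹ x, hmem⟩ : W) : MvPolynomial (Fin n) ℂ) = aL g⁻¹ x := by
      rw [hπ₀, LinearMap.comp_apply, Submodule.projectionOnto_apply_left hcompl]
      rfl
    exact h2
  have hπ_mem : ∀ x, π x ∈ W :=
    avg_mem aL aL W hWstab π₀ (fun v => Submodule.coe_mem _)
  have hπ_equi : ∀ (g : G) x, π (aL g x) = aL g (π x) :=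
    fun g x => avg_equivariant aL aL haLcomp haLcomp π₀ g x
  have hvex : ∃ v₀, f v₀ ≠ 0 := by
    by_contra hc
    push_neg at hc
    exact hf0 (LinearMap.ext fun v => by simp [hc v])
  obtain ⟨v₀, hv₀⟩ := hvex
  have hT : f v₀ ∈ Tspan ρ m := by
    have hxI : f v₀ ∈ Ideal.span
        {P : MvPolynomial (Fin n) ℂ | (∀ g, act ρ g P = P) ∧ MvPolynomial.constantCoeff P = 0} := by
      have := hfI v₀; rw [hIdef] at this; exact this
    have := homogComp_mem_Tspan ρ _ rfl hxI m
    rwa [homogeneousComponent_of_mem (hfm v₀), if_pos rfl] at this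
  have hgen : ∃ j, 1 ≤ j ∧ j ≤ m ∧ ∃ p h, p ∈ homogeneousSubmodule (Fin n) ℂ (m - j) ∧
      h ∈ homogeneousSubmodule (Fin n) ℂ j ∧ (∀ g, act ρ g h = h) ∧ π (p * h) ≠ 0 := by
    by_contra hno
    push_neg at hno
    have hle : Tspan ρ m ≤ LinearMap.ker π := by
      rw [Tspan, Submodule.span_le]
      rintro y ⟨j, hj1, hjm, p, h, hp, hh, hinv, rfl⟩
      rw [SetLike.mem_coe, LinearMap.mem_ker]
      exact hno j hj1 hjm p h hp hh hinv
    have h0 : π (f v₀) = 0 := hle hT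
    rw [hπ_fix _ ⟨v₀, rfl⟩] at h0
    exact hv₀ h0
  obtain ⟨j, hj1, hjm, p, h, hp, hh, hinv, hπph⟩ := hgen
  set ψ : MvPolynomial (Fin n) ℂ →ₗ[ℂ] MvPolynomial (Fin n) ℂ :=
    π ∘ₗ LinearMap.mulRight ℂ h with hψdef
  have hψ_equi : ∀ (g : G) q, ψ (aL g q) = aL g (ψ q) := by
    intro g q
    show π (act ρ g q * h) = aL g (π (q * h))
    conv_lhs => rw [← hinv g, ← map_mul (act ρ g)]
    exact hπ_equi g (q * h)
  have hψ_mem : ∀ q, ψ q ∈ W := fun q => hπ_mem _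
  have hψp : ψ p ≠ 0 := hπph
  set e := LinearEquiv.ofInjective f hinj with he
  have hfes : ∀ w : W, f (e.symm w) = (w : MvPolynomial (Fin n) ℂ) := by
    intro w
    have h1 : e (e.symm w) = w := e.apply_symm_apply w
    have h2 : ((e (e.symm w)) : MvPolynomial (Fin n) ℂ) = f (e.symm w) :=
      rfl
    rw [← h2, h1]
  set χ : MvPolynomial (Fin n) ℂ →ₗ[ℂ] (Fin d → ℂ) :=
    (e.symm : W →ₗ[ℂ] (Fin d → ℂ)) ∘ₗ (ψ.codRestrict W hψ_mem) with hχ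
  have hfχ : ∀ q, f (χ q) = ψ q := fun q => hfes ⟨ψ q, hψ_mem q⟩
  have hχ_equi : ∀ (g : G) q, χ (aL g q) = σ g (χ q) := by
    intro g q
    apply hinj
    rw [hfχ, hψ_equi, hfe, hfχ]
    rfl
  have hχp : χ p ≠ 0 := fun h0 => hψp (by rw [← hfχ, h0, map_zero])
  set U := (homogeneousSubmodule (Fin n) ℂ (m - j)).map χ with hU
  have hUstab : ∀ g, U.map (σ g) ≤ U := by
    intro g x hx
    rcases Submodule.mem_map.mp hx with ⟨y, hy, rfl⟩
    rcases Submodule.mem_map.mp hy with ⟨q, hq, rfl⟩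
    rw [← hχ_equi]
    exact ⟨aL g q, act_mem_homog ρ hq g, rfl⟩
  have hUtop : U = ⊤ := by
    rcases hσ.2 U hUstab with h0 | h1
    · exfalso
      apply hχp
      have hm : χ p ∈ U := ⟨p, hp, rfl⟩
      rw [h0] at hm
      exact (Submodule.mem_bot ℂ).mp hm
    · exact h1
  set χ' : (homogeneousSubmodule (Fin n) ℂ (m - j)) →ₗ[ℂ] (Fin d → ℂ) :=
    χ ∘ₗ (homogeneousSubmodule (Fin n) ℂ (m - j)).subtype with hχ'
  have hrange : LinearMap.range χ' = ⊤ := by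
    rw [hχ', LinearMap.range_comp, Submodule.range_subtype]
    exact hUtop
  obtain ⟨s₀', hs₀'⟩ := LinearMap.exists_rightInverse_of_surjective χ' hrange
  set s₀ : (Fin d → ℂ) →ₗ[ℂ] MvPolynomial (Fin n) ℂ :=
    (homogeneousSubmodule (Fin n) ℂ (m - j)).subtype ∘ₗ s₀' with hs₀
  have hχs₀ : ∀ v, χ (s₀ v) = v := fun v => LinearMap.congr_fun hs₀' v
  have hσcomp : ∀ g h : G, (σ g : (Fin d → ℂ) →ₗ[ℂ] _) ∘ₗ σ h = σ (g * h) := sigma_comp σ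
  set s := avg (fun g : G => (σ g : (Fin d → ℂ) →ₗ[ℂ] (Fin d → ℂ))) aL s₀ with hs
  have hs_equi : ∀ g v, s (σ g v) = aL g (s v) :=
    fun g v => avg_equivariant _ aL hσcomp haLcomp s₀ g v
  have hs_mem : ∀ v, s v ∈ homogeneousSubmodule (Fin n) ℂ (m - j) :=
    avg_mem _ aL _ (fun g w hw => act_mem_homog ρ hw g) s₀ (fun v => Submodule.coe_mem _)
  have hχs : ∀ v, χ (s v) = v := by
    intro v
    have hcomp := avg_comp (fun g : G => (σ g : (Fin d → ℂ) →ₗ[ℂ] (Fin d → ℂ))) aL hσcomp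
      (sigma_one σ) (fun g => (σ g : (Fin d → ℂ) →ₗ[ℂ] (Fin d → ℂ))) χ hχ_equi s₀
      (fun g v => by rw [hχs₀, hχs₀]) v
    rw [hs, hcomp, hχs₀]
  have hv1ex : ∃ v1 : Fin d → ℂ, v1 ≠ 0 := by
    by_contra hc
    push_neg at hc
    apply hσ.1
    ext x
    simp [hc x]
  obtain ⟨v1, hv1⟩ := hv1ex
  have hs0 : s ≠ 0 := by
    intro h0
    apply hv1
    rw [← hχs v1, h0]
    simp
  haveI := fd_homog n (m - j)
  have hpos : 0 < mult σ aL (homogeneousSubmodule (Fin n) ℂ (m - j)) :=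
    mult_pos_of σ aL _ s ⟨hs_equi, hs_mem⟩ hs0
  rw [haL] at hpos
  rw [hlow (m - j) (by omega)] at hpos
  exact lt_irrefl 0 hpos

end Main
section Surj
variable {G : Type*} [Group G] [Fintype G] {n : ℕ} (ρ : Representation ℂ G (Fin n → ℂ))

set_option synthInstance.maxHeartbeats 1000000 in
set_option maxHeartbeats 1000000 in
lemma phi_surj {d : ℕ} (σ : Representation ℂ G (Fin d → ℂ))
    (Isub : Submodule ℂ (MvPolynomial (Fin n) ℂ))
    (hI : ∀ g x, x ∈ Isub → act ρ g x ∈ Isub) (m : ℕ)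
    (fb : (Fin d → ℂ) →ₗ[ℂ] (MvPolynomial (Fin n) ℂ ⧸ Isub))
    (hfb : fb ∈ EHom σ (actQ (act ρ) Isub hI) (Abar Isub m)) :
    ∃ f, f ∈ EHom σ (fun g => (act ρ g).toLinearMap) (homogeneousSubmodule (Fin n) ℂ m) ∧
      Isub.mkQ ∘ₗ f = fb := by
  obtain ⟨hfbe, hfbm⟩ := hfb
  set Am := homogeneousSubmodule (Fin n) ℂ m with hAm
  set mkQ' : Am →ₗ[ℂ] (Abar Isub m) :=
    (Isub.mkQ ∘ₗ Am.subtype).codRestrict (Abar Isub m)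
      (fun x => Submodule.mem_map_of_mem x.2) with hmkQ'
  have hsurj : LinearMap.range mkQ' = ⊤ := by
    rw [LinearMap.range_eq_top]
    rintro ⟨y, hy⟩
    rcases Submodule.mem_map.mp hy with ⟨x, hx, rfl⟩
    exact ⟨⟨x, hx⟩, Subtype.ext rfl⟩
  obtain ⟨sec, hsec⟩ := LinearMap.exists_rightInverse_of_surjective mkQ' hsurj
  set fb' : (Fin d → ℂ) →ₗ[ℂ] (Abar Isub m) := fb.codRestrict _ hfbm with hfb'
  set f₀ : (Fin d → ℂ) →ₗ[ℂ] MvPolynomial (Fin n) ℂ := Am.subtype ∘ₗ sec ∘ₗ fb' with hf₀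
  have hf₀m : ∀ v, f₀ v ∈ Am := fun v => Submodule.coe_mem _
  have hf₀q : ∀ v, Isub.mkQ (f₀ v) = fb v := by
    intro v
    have h1 := LinearMap.congr_fun hsec (fb' v)
    exact congrArg Subtype.val h1
  set aL := fun g : G => (act ρ g).toLinearMap with haL
  have haLcomp : ∀ g h : G, aL g ∘ₗ aL h = aL (g * h) := aL_comp ρ
  set f := avg (fun g : G => (σ g : (Fin d → ℂ) →ₗ[ℂ] (Fin d → ℂ))) aL f₀ with hf
  have hfe : ∀ g v, f (σ g v) = aL g (f v) :=
    fun g v => avg_equivariant _ aL (sigma_comp σ) haLcomp f₀ g v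
  have hfm : ∀ v, f v ∈ Am :=
    avg_mem _ aL Am (fun g w hw => act_mem_homog ρ hw g) f₀ hf₀m
  have hπ : ∀ (g : G) (w : MvPolynomial (Fin n) ℂ),
      Isub.mkQ (aL g w) = actQ (act ρ) Isub hI g (Isub.mkQ w) := by
    intro g w
    simp only [actQ, Submodule.mkQ_apply, Submodule.mapQ_apply]
    rfl
  have hkey : ∀ v, Isub.mkQ (f v) = fb v := by
    intro v
    have hc := avg_comp (fun g : G => (σ g : (Fin d → ℂ) →ₗ[ℂ] (Fin d → ℂ))) aL (sigma_comp σ)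
      (sigma_one σ) (actQ (act ρ) Isub hI) Isub.mkQ hπ f₀
      (fun g v => by rw [hf₀q, hf₀q, hfbe]) v
    rw [hf, hc, hf₀q]
  exact ⟨f, ⟨hfe, hfm⟩, LinearMap.ext hkey⟩

end Surj
/-- For a finite Coxeter (reflection) group `G` acting on `V = ℂⁿ`, write the fake degree of
an irreducible `U` as `f_U(t) = t^q·g(t)`, `g(0) ≠ 0`; i.e. `q` is the lowest degree in
which `U` occurs in the coinvariant algebra `Ā` and `g(0)` its multiplicity there. Then `q`
equals `p(U)`, the smallest degree of a homogeneous component of `A` containing a copy of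
`U`, and `g(0)` equals the multiplicity of `U` in `A_{p(U)}`. -/
theorem stmt_14 {G : Type*} [Group G] [Fintype G] (n : ℕ)
    (ρ : Representation ℂ G (Fin n → ℂ)) (hρ : Function.Injective ρ)
    (hrefl : ∃ S : Set G, Subgroup.closure S = ⊤ ∧ ∀ s ∈ S,
      ρ s ∘ₗ ρ s = LinearMap.id ∧ ρ s ≠ LinearMap.id ∧
        Module.finrank ℂ ↥(LinearMap.ker (ρ s - LinearMap.id)) = n - 1)
    (Isub : Submodule ℂ (MvPolynomial (Fin n) ℂ))
    (hIdef : Isub = Submodule.restrictScalars ℂ (Ideal.span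
      {P : MvPolynomial (Fin n) ℂ | (∀ g, act ρ g P = P) ∧ MvPolynomial.constantCoeff P = 0}))
    (hI : ∀ g x, x ∈ Isub → act ρ g x ∈ Isub)
    (d : ℕ) (σ : Representation ℂ G (Fin d → ℂ)) (hσ : IsIrred σ) :
    sInf {m | 0 < multQ (act ρ) Isub hI σ m} = pval (act ρ) σ ∧
      multQ (act ρ) Isub hI σ (sInf {m | 0 < multQ (act ρ) Isub hI σ m}) =
        mult σ (fun g => (act ρ g).toLinearMap)
          (MvPolynomial.homogeneousSubmodule (Fin n) ℂ (pval (act ρ) σ)) := by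

  classical
  -- notation
  have hmQdef : ∀ m, multQ (act ρ) Isub hI σ m = mult σ (actQ (act ρ) Isub hI) (Abar Isub m) :=
    fun m => rfl
  -- (1) if mult in A_m vanishes, so does mult in Abar m
  have hQA : ∀ m, mult σ (fun g => (act ρ g).toLinearMap) (homogeneousSubmodule (Fin n) ℂ m) = 0 →
      multQ (act ρ) Isub hI σ m = 0 := by
    intro m hm
    haveI := fd_homog n m
    haveI : FiniteDimensional ℂ (Abar Isub m) := Module.Finite.map _ _
    rw [mult_eq_zero_iff] at hm
    rw [hmQdef, mult_eq_zero_iff]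
    rw [Submodule.eq_bot_iff]
    intro fb hfb
    obtain ⟨f, hf, hfq⟩ := phi_surj ρ σ Isub hI m fb hfb
    rw [hm] at hf
    have : f = 0 := (Submodule.mem_bot ℂ).mp hf
    rw [← hfq, this]
    ext v
    simp
  set p := pval (act ρ) σ with hp
  have hlow : ∀ k, k < p →
      mult σ (fun g => (act ρ g).toLinearMap) (homogeneousSubmodule (Fin n) ℂ k) = 0 := by
    intro k hk
    have : k ∉ {m | 0 < mult σ (fun g => (act ρ g).toLinearMap)
        (homogeneousSubmodule (Fin n) ℂ m)} := Nat.notMem_of_lt_sInf hk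
    simpa using Nat.eq_zero_of_not_pos this
  -- (2) the equivalence at degree p
  haveI := fd_homog n p
  haveI : FiniteDimensional ℂ (Abar Isub p) := Module.Finite.map _ _
  have hmemQ : ∀ (f : (Fin d → ℂ) →ₗ[ℂ] MvPolynomial (Fin n) ℂ),
      f ∈ EHom σ (fun g => (act ρ g).toLinearMap) (homogeneousSubmodule (Fin n) ℂ p) →
      (Isub.mkQ ∘ₗ f) ∈ EHom σ (actQ (act ρ) Isub hI) (Abar Isub p) := by
    rintro f ⟨h1, h2⟩
    constructor
    · intro g v
      rw [LinearMap.comp_apply, h1]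
      simp only [actQ, LinearMap.comp_apply, Submodule.mkQ_apply, Submodule.mapQ_apply]
      rfl
    · intro v
      exact Submodule.mem_map_of_mem (h2 v)
  let Φ : EHom σ (fun g => (act ρ g).toLinearMap) (homogeneousSubmodule (Fin n) ℂ p) →ₗ[ℂ]
      EHom σ (actQ (act ρ) Isub hI) (Abar Isub p) :=
    { toFun := fun f => ⟨Isub.mkQ ∘ₗ f.1, hmemQ f.1 f.2⟩
      map_add' := fun f g => Subtype.ext (LinearMap.ext fun v => by
        simp [LinearMap.comp_apply])
      map_smul' := fun c f => Subtype.ext (LinearMap.ext fun v => by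
        simp [LinearMap.comp_apply]) }
  have hΦker : ∀ f, Φ f = 0 → f = 0 := by
    intro f hf
    have hzero : (Isub.mkQ ∘ₗ f.1) = 0 := congrArg Subtype.val hf
    have hmemI : ∀ v, f.1 v ∈ Isub := by
      intro v
      have : Isub.mkQ (f.1 v) = 0 := LinearMap.congr_fun hzero v
      rwa [← LinearMap.mem_ker, Submodule.ker_mkQ] at this
    have : f.1 = 0 := keyL ρ σ hσ Isub hIdef hlow f.1 f.2.1 f.2.2 hmemI
    exact Subtype.ext this
  have hΦinj : Function.Injective Φ := by
    intro f g hfg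
    have h1 : Isub.mkQ ∘ₗ f.1 = Isub.mkQ ∘ₗ g.1 := congrArg Subtype.val hfg
    have h0 := hΦker (f - g) (Subtype.ext (LinearMap.ext fun v => by
      have h2 := LinearMap.congr_fun h1 v
      show Isub.mkQ (f.1 v - g.1 v) = 0
      rw [map_sub, LinearMap.comp_apply, LinearMap.comp_apply] at *
      rw [h2, sub_self]))
    exact sub_eq_zero.mp h0
  have hΦsurj : Function.Surjective Φ := by
    rintro ⟨fb, hfb⟩
    obtain ⟨f, hf, hfq⟩ := phi_surj ρ σ Isub hI p fb hfb
    exact ⟨⟨f, hf⟩, Subtype.ext hfq⟩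
  have hQP : multQ (act ρ) Isub hI σ p =
      mult σ (fun g => (act ρ g).toLinearMap) (homogeneousSubmodule (Fin n) ℂ p) :=
    (LinearEquiv.ofBijective Φ ⟨hΦinj, hΦsurj⟩).finrank_eq.symm
  -- (3) assembly
  by_cases hne : {m | 0 < mult σ (fun g => (act ρ g).toLinearMap)
      (homogeneousSubmodule (Fin n) ℂ m)}.Nonempty
  · have hppos : 0 < mult σ (fun g => (act ρ g).toLinearMap)
        (homogeneousSubmodule (Fin n) ℂ p) := Nat.sInf_mem hne
    have hqpos : 0 < multQ (act ρ) Isub hI σ p := by rw [hQP]; exact hppos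
    have hqeq : sInf {m | 0 < multQ (act ρ) Isub hI σ m} = p := by
      apply le_antisymm (Nat.sInf_le (show p ∈ {m | 0 < multQ (act ρ) Isub hI σ m} from hqpos))
      by_contra hlt
      push_neg at hlt
      have hmem : 0 < multQ (act ρ) Isub hI σ (sInf {m | 0 < multQ (act ρ) Isub hI σ m}) :=
        Nat.sInf_mem (⟨p, hqpos⟩ : {m | 0 < multQ (act ρ) Isub hI σ m}.Nonempty)
      have h0 : multQ (act ρ) Isub hI σ (sInf {m | 0 < multQ (act ρ) Isub hI σ m}) = 0 :=
        hQA _ (hlow _ hlt)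
      omega
    exact ⟨hqeq, by rw [hqeq, hQP]⟩
  · have hall : ∀ m, mult σ (fun g => (act ρ g).toLinearMap)
        (homogeneousSubmodule (Fin n) ℂ m) = 0 := by
      intro m
      by_contra hm
      exact hne ⟨m, Nat.pos_of_ne_zero hm⟩
    have hqall : ∀ m, multQ (act ρ) Isub hI σ m = 0 := fun m => hQA m (hall m)
    have h1 : {m | 0 < multQ (act ρ) Isub hI σ m} = ∅ := by
      ext m; simp [hqall m]
    have h2 : {m | 0 < mult σ (fun g => (act ρ g).toLinearMap)
        (homogeneousSubmodule (Fin n) ℂ m)} = ∅ := by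
      ext m; simp [hall m]
    have hp0 : p = 0 := by
      rw [hp, pval, h2, Nat.sInf_empty]
    constructor
    · rw [h1, Nat.sInf_empty, hp0]
    · rw [hqall, hall]
end

section
/- For the hyperoctahedral group W(B_n) with irreducible representations U_{α,β} indexed by ordered pairs of partitions with |α| + |β| = n: if n is odd and α ≠ β give representations U_{α,β} and U_{β,α}, then their lowest fake-degree exponents differ, i.e. p(U_{α,β}) ≠ p(U_{β,α}). More precisely, p(U_{α,β}) = p(U_{β,α}) implies |α| = |β| and hence n even. -/
/-- `E(m) = C(2,2) + C(3,2) + ⋯ + C(m−1,2)`, the exponent correction in Lusztig's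
formula. -/
def Ebinom (m : ℕ) : ℕ := ∑ k ∈ Finset.range m, k.choose 2

/-- Lusztig's formula for the fake degree of the irreducible representation `U_{α,β}` of
the hyperoctahedral group `W(B_nn)`, where `α, β` are partitions (written as antitone
functions `a : Fin m' → ℕ`, `b : Fin m'' → ℕ`) with `|α| + |β| = nn`, `λᵢ = αᵢ − i + m'`,
`μᵢ = βᵢ − i + m''`, as a rational function in `t`. -/
noncomputable def fakeB (nn : ℕ) {m' m'' : ℕ} (a : Fin m' → ℕ) (b : Fin m'' → ℕ) :
    RatFunc ℂ :=
  let T : RatFunc ℂ := RatFunc.X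
  let lam : Fin m' → ℕ := fun i => a i + (m' - 1 - (i : ℕ))
  let mu : Fin m'' → ℕ := fun i => b i + (m'' - 1 - (i : ℕ))
  T ^ (∑ i, b i) * (∏ i ∈ Finset.range nn, (T ^ (2 * (i + 1)) - 1)) /
      (T ^ (2 * Ebinom m') * T ^ (2 * Ebinom m'')) *
    ((∏ p ∈ Finset.univ.filter fun p : Fin m' × Fin m' => lam p.2 < lam p.1,
        (T ^ (2 * lam p.1) - T ^ (2 * lam p.2))) /
      ∏ j, ∏ i ∈ Finset.range (lam j), (T ^ (2 * (i + 1)) - 1)) *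
    ((∏ p ∈ Finset.univ.filter fun p : Fin m'' × Fin m'' => mu p.2 < mu p.1,
        (T ^ (2 * mu p.1) - T ^ (2 * mu p.2))) /
      ∏ j, ∏ i ∈ Finset.range (mu j), (T ^ (2 * (i + 1)) - 1))

/-- The order of vanishing at `t = 0` of a rational function; for the fake degree
`f_U(t) = t^{p(U)}·g_U(t)`, `g_U(0) ≠ 0`, this is the exponent `p(U)`. -/
noncomputable def ordZero (F : RatFunc ℂ) : ℤ :=
  (F.num.rootMultiplicity 0 : ℤ) - (F.denom.rootMultiplicity 0 : ℤ)

lemma ordZero_mul (F G : RatFunc ℂ) (hF : F ≠ 0) (hG : G ≠ 0) :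
    ordZero (F * G) = ordZero F + ordZero G := by
  have hFG : F * G ≠ 0 := mul_ne_zero hF hG
  set φ := algebraMap (Polynomial ℂ) (RatFunc ℂ)
  have hd : ∀ H : RatFunc ℂ, φ H.denom ≠ 0 := fun H => by
    simpa [φ] using
      (map_ne_zero_iff _ (RatFunc.algebraMap_injective ℂ)).mpr (RatFunc.denom_ne_zero H)
  have key : (F * G).num * (F.denom * G.denom) = F.num * G.num * (F * G).denom := by
    apply RatFunc.algebraMap_injective ℂ
    simp only [map_mul]
    have e1 := RatFunc.num_div_denom (F * G)
    have e2 := RatFunc.num_div_denom F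
    have e3 := RatFunc.num_div_denom G
    rw [div_eq_iff (hd _)] at e1 e2 e3
    rw [e1, e2, e3]
    ring
  have h1 := Polynomial.rootMultiplicity_mul (x := (0:ℂ))
      (p := (F*G).num) (q := F.denom * G.denom)
      (mul_ne_zero (RatFunc.num_ne_zero hFG)
        (mul_ne_zero (RatFunc.denom_ne_zero F) (RatFunc.denom_ne_zero G)))
  have h2 := Polynomial.rootMultiplicity_mul (x := (0:ℂ))
      (p := F.num * G.num) (q := (F*G).denom)
      (mul_ne_zero (mul_ne_zero (RatFunc.num_ne_zero hF) (RatFunc.num_ne_zero hG))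
        (RatFunc.denom_ne_zero _))
  rw [key] at h1
  have h3 := Polynomial.rootMultiplicity_mul (x := (0:ℂ))
      (p := F.denom) (q := G.denom)
      (mul_ne_zero (RatFunc.denom_ne_zero F) (RatFunc.denom_ne_zero G))
  have h4 := Polynomial.rootMultiplicity_mul (x := (0:ℂ))
      (p := F.num) (q := G.num)
      (mul_ne_zero (RatFunc.num_ne_zero hF) (RatFunc.num_ne_zero hG))
  simp only [ordZero]
  omega

lemma ordZero_X_pow (k : ℕ) : ordZero ((RatFunc.X : RatFunc ℂ) ^ k) = k := by
  have : (RatFunc.X : RatFunc ℂ) ^ k = algebraMap (Polynomial ℂ) (RatFunc ℂ) (Polynomial.X ^ k) := by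
    simp [RatFunc.algebraMap_X]
  rw [this]
  simp only [ordZero, RatFunc.num_algebraMap, RatFunc.denom_algebraMap]
  have : (Polynomial.X : Polynomial ℂ) ^ k = (Polynomial.X - Polynomial.C 0) ^ k := by simp
  rw [this, Polynomial.rootMultiplicity_X_sub_C_pow]
  simp [Polynomial.rootMultiplicity_eq_zero]

lemma ratX_pow_sub_one_ne (n : ℕ) (hn : 0 < n) : (RatFunc.X : RatFunc ℂ) ^ n - 1 ≠ 0 := by
  have : (RatFunc.X : RatFunc ℂ) ^ n - 1
      = algebraMap (Polynomial ℂ) (RatFunc ℂ) (Polynomial.X ^ n - 1) := by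
    simp [RatFunc.algebraMap_X]
  rw [this, map_ne_zero_iff _ (RatFunc.algebraMap_injective ℂ)]
  intro hcon
  have := congrArg (Polynomial.coeff · 0) hcon
  simp only [Polynomial.coeff_sub, Polynomial.coeff_X_pow, Polynomial.coeff_one,
    Polynomial.coeff_zero] at this
  rw [if_neg (by omega)] at this; simp at this

lemma ratX_pow_sub_pow_ne (m n : ℕ) (h : n < m) :
    (RatFunc.X : RatFunc ℂ) ^ m - (RatFunc.X : RatFunc ℂ) ^ n ≠ 0 := by
  have : (RatFunc.X : RatFunc ℂ) ^ m - (RatFunc.X : RatFunc ℂ) ^ n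
      = algebraMap (Polynomial ℂ) (RatFunc ℂ) (Polynomial.X ^ m - Polynomial.X ^ n) := by
    simp [RatFunc.algebraMap_X]
  rw [this, map_ne_zero_iff _ (RatFunc.algebraMap_injective ℂ)]
  apply sub_ne_zero_of_ne
  intro hcon
  have := congrArg Polynomial.natDegree hcon
  rw [Polynomial.natDegree_X_pow, Polynomial.natDegree_X_pow] at this
  omega

lemma fakeB_ne_zero (nn : ℕ) {m' m'' : ℕ} (a : Fin m' → ℕ) (b : Fin m'' → ℕ) :
    fakeB nn a b ≠ 0 := by
  have hX : (RatFunc.X : RatFunc ℂ) ≠ 0 := RatFunc.X_ne_zero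
  unfold fakeB
  apply mul_ne_zero
  apply mul_ne_zero
  · apply div_ne_zero
    · exact mul_ne_zero (pow_ne_zero _ hX)
        (Finset.prod_ne_zero_iff.mpr fun i _ => ratX_pow_sub_one_ne _ (by omega))
    · exact mul_ne_zero (pow_ne_zero _ hX) (pow_ne_zero _ hX)
  · apply div_ne_zero
    · refine Finset.prod_ne_zero_iff.mpr fun p hp => ?_
      exact ratX_pow_sub_pow_ne _ _ (by have := (Finset.mem_filter.mp hp).2; omega)
    · refine Finset.prod_ne_zero_iff.mpr fun j _ => ?_
      exact Finset.prod_ne_zero_iff.mpr fun i _ => ratX_pow_sub_one_ne _ (by omega)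
  · apply div_ne_zero
    · refine Finset.prod_ne_zero_iff.mpr fun p hp => ?_
      exact ratX_pow_sub_pow_ne _ _ (by have := (Finset.mem_filter.mp hp).2; omega)
    · refine Finset.prod_ne_zero_iff.mpr fun j _ => ?_
      exact Finset.prod_ne_zero_iff.mpr fun i _ => ratX_pow_sub_one_ne _ (by omega)

lemma fakeB_swap (nn : ℕ) {m' m'' : ℕ} (a : Fin m' → ℕ) (b : Fin m'' → ℕ) :
    (RatFunc.X : RatFunc ℂ) ^ (∑ i, a i) * fakeB nn a b
      = (RatFunc.X : RatFunc ℂ) ^ (∑ i, b i) * fakeB nn b a := by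
  unfold fakeB
  ring

/-- For `W(B_nn)`: if the lowest fake-degree exponents of `U_{α,β}` and `U_{β,α}` agree,
i.e. `p(U_{α,β}) = p(U_{β,α})`, then `|α| = |β|` and hence `nn` is even. In particular,
for odd `nn` the representations `U_{α,β}` and `U_{β,α}` first occur in different
degrees. -/
theorem stmt_18 (nn : ℕ) {m' m'' : ℕ} (a : Fin m' → ℕ) (b : Fin m'' → ℕ)
    (ha : Antitone a) (hb : Antitone b)
    (hsum : (∑ i, a i) + (∑ i, b i) = nn)
    (h : ordZero (fakeB nn a b) = ordZero (fakeB nn b a)) :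
    (∑ i, a i) = (∑ i, b i) ∧ Even nn := by
  have key := congrArg ordZero (fakeB_swap nn a b)
  rw [ordZero_mul _ _ (pow_ne_zero _ RatFunc.X_ne_zero) (fakeB_ne_zero nn a b),
    ordZero_mul _ _ (pow_ne_zero _ RatFunc.X_ne_zero) (fakeB_ne_zero nn b a),
    ordZero_X_pow, ordZero_X_pow, h] at key
  have hab : (∑ i, a i) = (∑ i, b i) := by exact_mod_cast by omega
  exact ⟨hab, ⟨∑ i, a i, by omega⟩⟩
end
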